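/- arXiv:2007.11991 — 9 statements merged into one kernel-verified Lean document; each statement's English description precedes it below -/
import Mathlib

section
/- In an antiassociative algebra over a field of characteristic not 2, for all x, y, z, w we have ((x·y)·z)·w = 0 and x·((y·z)·w) = 0. -/
/-- In an antiassociative algebra over a field of characteristic ≠ 2,
((x·y)·z)·w = 0 and x·((y·z)·w) = 0. -/
theorem antiassoc_four_left_right_zero {K A : Type*} [Field K] [AddCommGroup A] [Module K A]
    (h2 : (2 : K) ≠ 0) (mul : A →ₗ[K] A →ₗ[K] A)
    (hanti : ∀ x y z : A, mul (mul x y) z = - mul x (mul y z)) :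
    ∀ x y z w : A, mul (mul (mul x y) z) w = 0 ∧ mul x (mul (mul y z) w) = 0 := by
  intro x y z w
  set L := mul (mul (mul x y) z) w with hL
  have e1 : L = mul x (mul (mul y z) w) := by
    rw [hL, hanti x y z, map_neg, LinearMap.neg_apply, hanti x (mul y z) w, neg_neg]
  have e2 : L = - mul x (mul (mul y z) w) := by
    rw [hL, hanti (mul x y) z w, hanti x y (mul z w), hanti y z w, map_neg, neg_neg]
  have hs : (2 : K) • L = 0 := by
    rw [two_smul]
    nth_rewrite 1 [e1]
    nth_rewrite 1 [e2]
    exact add_neg_cancel _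
  have hz : L = 0 := (smul_eq_zero.mp hs).resolve_left h2
  exact ⟨hz, e1 ▸ hz⟩
end

section
/- Given an antiassociative algebra (A, ·) over a field of characteristic not 2 or 3, the product x ◇ y = (1/2)(x·y + y·x) makes A into a mock-Lie algebra, i.e., ◇ is commutative and satisfies the Jacobi identity (x◇y)◇z + (z◇x)◇y + (y◇z)◇x = 0. -/
/-- The anticommutator x ◇ y = (1/2)(x·y + y·x) of an antiassociative algebra
(char ≠ 2, 3) is a mock-Lie product: commutative and satisfying the Jacobi identity. -/
theorem antiassoc_anticommutator_mock_lie {K A : Type*} [Field K] [AddCommGroup A] [Module K A]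
    (h2 : (2 : K) ≠ 0) (h3 : (3 : K) ≠ 0) (mul : A →ₗ[K] A →ₗ[K] A)
    (hanti : ∀ x y z : A, mul (mul x y) z = - mul x (mul y z))
    (d : A → A → A)
    (hd : ∀ x y : A, d x y = (2 : K)⁻¹ • (mul x y + mul y x)) :
    (∀ x y : A, d x y = d y x) ∧
    (∀ x y z : A, d (d x y) z + d (d z x) y + d (d y z) x = 0) := by
  constructor
  · intro x y
    rw [hd, hd, add_comm]
  · intro x y z
    simp only [hd, map_add, map_smul, LinearMap.add_apply, LinearMap.smul_apply, smul_add,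
      hanti]
    module
end

section
/- Let A be a q-generalized associative algebra and V a vector space with linear maps l, r : A → gl(V). Then (l, r, V) is a bimodule of A (i.e., l(xy)v = q·l(x)l(y)v, r(xy)v = q⁻¹·r(y)r(x)v, l(x)r(y)v = q⁻¹·r(y)l(x)v) if and only if the product (x+a)∗(y+b) = x·y + l(x)b + r(y)a on A ⊕ V satisfies ((u∗v)∗w) = q·(u∗(v∗w)) for all u, v, w ∈ A ⊕ V. -/
/-- (l, r, V) is a bimodule of a q-generalized associative algebra A iff the
semidirect product (x+a)∗(y+b) = x·y + (l(x)b + r(y)a) on A ⊕ V is q-associative. -/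
theorem bimodule_iff_semidirect_q_associative {K A V : Type*} [Field K]
    [AddCommGroup A] [Module K A] [AddCommGroup V] [Module K V]
    (q : K) (hq : q ≠ 0) (mul : A →ₗ[K] A →ₗ[K] A)
    (hassoc : ∀ x y z : A, mul (mul x y) z = q • mul x (mul y z))
    (l r : A → V →ₗ[K] V)
    (star : A × V → A × V → A × V)
    (hstar : ∀ p p' : A × V, star p p' = (mul p.1 p'.1, l p.1 p'.2 + r p'.1 p.2)) :
    ((∀ (x y : A) (v : V), l (mul x y) v = q • l x (l y v)) ∧
     (∀ (x y : A) (v : V), r (mul x y) v = q⁻¹ • r y (r x v)) ∧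
     (∀ (x y : A) (v : V), l x (r y v) = q⁻¹ • r y (l x v))) ↔
    (∀ u v w : A × V, star (star u v) w = q • star u (star v w)) := by
  constructor
  · rintro ⟨hl, hr, hlr⟩ u v w
    simp only [hstar, Prod.smul_mk, smul_add]
    refine Prod.ext (hassoc _ _ _) ?_
    simp only [map_add]
    rw [hl, hr, hlr]
    simp only [smul_add, smul_smul, mul_inv_cancel₀ hq, one_smul]
    abel
  · intro h
    refine ⟨?_, ?_, ?_⟩
    · intro x y v
      have := congrArg Prod.snd (h (x, 0) (y, 0) (0, v))
      simpa [hstar] using this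
    · intro x y v
      have := congrArg Prod.snd (h (0, v) (x, 0) (y, 0))
      simp [hstar] at this
      rw [this, smul_smul, inv_mul_cancel₀ hq, one_smul]
    · intro x y v
      have := congrArg Prod.snd (h (x, 0) (0, v) (y, 0))
      simp [hstar] at this
      rw [this, smul_smul, inv_mul_cancel₀ hq, one_smul]
end

section
/- If (l, r, V) is a bimodule of a q-generalized associative algebra A, then (q⁻²r*, q²l*, V*) is a bimodule of A, where l*, r* : A → gl(V*) are the dual maps defined by ⟨l*(x)u*, v⟩ = ⟨u*, l(x)v⟩ and ⟨r*(x)u*, v⟩ = ⟨u*, r(x)v⟩. -/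
/-- If (l, r, V) is a bimodule of a q-generalized associative algebra A, then
(q⁻²r*, q²l*, V*) is a bimodule of A. -/
theorem dual_bimodule_of_bimodule {K A V : Type*} [Field K]
    [AddCommGroup A] [Module K A] [AddCommGroup V] [Module K V]
    (q : K) (hq : q ≠ 0) (mul : A →ₗ[K] A →ₗ[K] A)
    (hassoc : ∀ x y z : A, mul (mul x y) z = q • mul x (mul y z))
    (l r : A → V →ₗ[K] V)
    (hl : ∀ (x y : A) (v : V), l (mul x y) v = q • l x (l y v))
    (hr : ∀ (x y : A) (v : V), r (mul x y) v = q⁻¹ • r y (r x v))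
    (hlr : ∀ (x y : A) (v : V), l x (r y v) = q⁻¹ • r y (l x v))
    (ls rs : A → Module.Dual K V →ₗ[K] Module.Dual K V)
    (hls : ∀ (x : A) (u : Module.Dual K V) (v : V), ls x u v = u (l x v))
    (hrs : ∀ (x : A) (u : Module.Dual K V) (v : V), rs x u v = u (r x v))
    (l' r' : A → Module.Dual K V → Module.Dual K V)
    (hl' : ∀ (x : A) (u : Module.Dual K V), l' x u = (q⁻¹ * q⁻¹) • rs x u)
    (hr' : ∀ (x : A) (u : Module.Dual K V), r' x u = (q * q) • ls x u) :
    (∀ (x y : A) (u : Module.Dual K V), l' (mul x y) u = q • l' x (l' y u)) ∧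
    (∀ (x y : A) (u : Module.Dual K V), r' (mul x y) u = q⁻¹ • r' y (r' x u)) ∧
    (∀ (x y : A) (u : Module.Dual K V), l' x (r' y u) = q⁻¹ • r' y (l' x u)) := by
  refine ⟨fun x y u => ?_, fun x y u => ?_, fun x y u => ?_⟩ <;>
  · ext v
    simp only [hl', hr', map_smul, LinearMap.smul_apply, smul_eq_mul, hls, hrs,
      hl, hr, hlr, map_smul, smul_eq_mul]
    field_simp
    try ring
end

section
/- Let (A, ≺, ≻) be a q-generalized dendriform algebra. Then the product x∗y = x≺y + x≻y makes A into a q-generalized associative algebra, i.e., (x∗y)∗z = q·x∗(y∗z) for all x, y, z. -/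
/-- A q-generalized dendriform algebra gives a q-generalized associative algebra
via x∗y = x≺y + x≻y. -/
theorem q_dendriform_gives_q_associative {K A : Type*} [Field K] [AddCommGroup A]
    [Module K A] (q : K) (hq : q ≠ 0)
    (prec succ : A →ₗ[K] A →ₗ[K] A)
    (star : A → A → A) (hstar : ∀ x y : A, star x y = prec x y + succ x y)
    (d1 : ∀ x y z : A, prec (prec x y) z = q • prec x (star y z))
    (d2 : ∀ x y z : A, prec (succ x y) z = q • succ x (prec y z))
    (d3 : ∀ x y z : A, succ x (succ y z) = q⁻¹ • succ (star x y) z) :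
    ∀ x y z : A, star (star x y) z = q • star x (star y z) := by
  intro x y z
  have h3 : succ (star x y) z = q • succ x (succ y z) := by
    rw [d3, smul_smul, mul_inv_cancel₀ hq, one_smul]
  rw [hstar x y, map_add, LinearMap.add_apply] at h3
  simp only [hstar, map_add, LinearMap.add_apply, d1, d2, h3, smul_add, hstar,
    LinearMap.map_smul, map_add]
  abel
end

section
/- Let (A, ≺, ≻) be a q-generalized dendriform algebra with associated q-generalized associative algebra (A, ∗) where x∗y = x≺y + x≻y. Then (L_≻, R_≺, A) is a bimodule of (A, ∗), where L_≻(x)y = x≻y and R_≺(x)y = y≺x. -/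
/-- A bimodule of a q-generalized associative algebra. -/
def IsBimodule {K A V : Type*} [Field K] [AddCommGroup A] [Module K A]
    [AddCommGroup V] [Module K V] (q : K) (mul : A → A → A)
    (l r : A → V →ₗ[K] V) : Prop :=
  (∀ (x y : A) (v : V), l (mul x y) v = q • l x (l y v)) ∧
  (∀ (x y : A) (v : V), r (mul x y) v = q⁻¹ • r y (r x v)) ∧
  (∀ (x y : A) (v : V), l x (r y v) = q⁻¹ • r y (l x v))

/-- (L_≻, R_≺, A) is a bimodule of the associated q-generalized associative
algebra of a q-generalized dendriform algebra. -/
theorem left_succ_right_prec_bimodule {K A : Type*} [Field K] [AddCommGroup A]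
    [Module K A] (q : K) (hq : q ≠ 0)
    (prec succ : A →ₗ[K] A →ₗ[K] A)
    (star : A → A → A) (hstar : ∀ x y : A, star x y = prec x y + succ x y)
    (d1 : ∀ x y z : A, prec (prec x y) z = q • prec x (star y z))
    (d2 : ∀ x y z : A, prec (succ x y) z = q • succ x (prec y z))
    (d3 : ∀ x y z : A, succ x (succ y z) = q⁻¹ • succ (star x y) z) :
    IsBimodule q star (fun x => succ x) (fun x => prec.flip x) := by
  refine ⟨fun x y v => ?_, fun x y v => ?_, fun x y v => ?_⟩
  · simp only
    rw [d3, smul_smul, mul_inv_cancel₀ hq, one_smul]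
  · simp only [LinearMap.flip_apply]
    rw [d1, smul_smul, inv_mul_cancel₀ hq, one_smul]
  · simp only [LinearMap.flip_apply]
    rw [d2, smul_smul, inv_mul_cancel₀ hq, one_smul]
end

section
/- If (l, r, V) is a bimodule of the associated q-generalized associative algebra (A, ∗) of a q-generalized dendriform algebra (A, ≻, ≺), then (l, 0, 0, r, V) is a bimodule of the q-generalized dendriform algebra (A, ≻, ≺). -/
/-- A bimodule of a q-generalized dendriform algebra. -/
def IsDendBimodule {K A V : Type*} [Field K] [AddCommGroup A] [Module K A]
    [AddCommGroup V] [Module K V] (q : K) (prec succ star : A → A → A)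
    (ls rs lp rp : A → V →ₗ[K] V) : Prop :=
  (∀ (x y : A) (v : V), lp (prec x y) v = q • lp x (ls y v + lp y v)) ∧
  (∀ (x y : A) (v : V), rp x (lp y v) = q • lp y (rs x v + rp x v)) ∧
  (∀ (x y : A) (v : V), rp x (rp y v) = q • rp (star y x) v) ∧
  (∀ (x y : A) (v : V), lp (succ x y) v = q • ls x (lp y v)) ∧
  (∀ (x y : A) (v : V), rp x (ls y v) = q • ls y (rp x v)) ∧
  (∀ (x y : A) (v : V), rp x (rs y v) = q • rs (prec y x) v) ∧
  (∀ (x y : A) (v : V), ls (star x y) v = q • ls x (ls y v)) ∧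
  (∀ (x y : A) (v : V), rs x (ls y v + lp y v) = q • ls y (rs x v)) ∧
  (∀ (x y : A) (v : V), rs x (rs y v + rp y v) = q • rs (succ y x) v)

/-- A bimodule (l, r, V) of the associated q-generalized associative algebra of
a q-generalized dendriform algebra yields a dendriform bimodule (l, 0, 0, r, V). -/
theorem assoc_bimodule_gives_dendriform_bimodule {K A V : Type*} [Field K]
    [AddCommGroup A] [Module K A] [AddCommGroup V] [Module K V]
    (q : K) (hq : q ≠ 0)
    (prec succ : A →ₗ[K] A →ₗ[K] A)
    (star : A → A → A) (hstar : ∀ x y : A, star x y = prec x y + succ x y)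
    (d1 : ∀ x y z : A, prec (prec x y) z = q • prec x (star y z))
    (d2 : ∀ x y z : A, prec (succ x y) z = q • succ x (prec y z))
    (d3 : ∀ x y z : A, succ x (succ y z) = q⁻¹ • succ (star x y) z)
    (l r : A → V →ₗ[K] V)
    (h : IsBimodule q star l r) :
    IsDendBimodule q (fun x y => prec x y) (fun x y => succ x y) star
      l (fun _ => 0) (fun _ => 0) r := by
  obtain ⟨h1, h2, h3⟩ := h
  refine ⟨?_, ?_, ?_, ?_, ?_, ?_, ?_, ?_, ?_⟩ <;> intro x y v
  · simp
  · simp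
  · rw [h2, smul_smul, mul_inv_cancel₀ hq, one_smul]
  · simp
  · rw [h3, smul_smul, mul_inv_cancel₀ hq, one_smul]
  · simp
  · exact h1 x y v
  · simp
  · simp
end

section
/- Let A be an antiassociative algebra, (l, r, V) a bimodule of A, and T : V → A an O-operator, i.e., T(u)·T(v) = T(l(T(u))v + r(T(v))u) for all u, v ∈ V. Then the products u ≻ v = l(T(u))v and u ≺ v = r(T(v))u define an antidendriform algebra structure on V. -/
/-- An O-operator on an antiassociative algebra induces an antidendriform
algebra structure on V via u ≻ v = l(T(u))v and u ≺ v = r(T(v))u. -/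
theorem o_operator_gives_antidendriform {K A V : Type*} [Field K]
    [AddCommGroup A] [Module K A] [AddCommGroup V] [Module K V]
    (mul : A →ₗ[K] A →ₗ[K] A)
    (hanti : ∀ x y z : A, mul (mul x y) z = - mul x (mul y z))
    (l r : A → V →ₗ[K] V)
    (hl : ∀ (x y : A) (v : V), l (mul x y) v = - l x (l y v))
    (hr : ∀ (x y : A) (v : V), r (mul x y) v = - r y (r x v))
    (hlr : ∀ (x y : A) (v : V), l x (r y v) = - r y (l x v))
    (T : V →ₗ[K] A)
    (hT : ∀ u v : V, mul (T u) (T v) = T (l (T u) v + r (T v) u))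
    (succ prec : V → V → V)
    (hsucc : ∀ u v : V, succ u v = l (T u) v)
    (hprec : ∀ u v : V, prec u v = r (T v) u)
    (star : V → V → V) (hstar : ∀ u v : V, star u v = prec u v + succ u v) :
    (∀ x y z : V, prec (prec x y) z = - prec x (star y z)) ∧
    (∀ x y z : V, prec (succ x y) z = - succ x (prec y z)) ∧
    (∀ x y z : V, succ x (succ y z) = - succ (star x y) z) := by
  refine ⟨?_, ?_, ?_⟩
  · intro x y z
    rw [hprec, hprec, hprec, hstar, hprec, hsucc, add_comm ((r (T z)) y), ← hT, hr, neg_neg]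
  · intro x y z
    rw [hprec, hsucc, hsucc, hprec, hlr, neg_neg]
  · intro x y z
    rw [hsucc, hsucc, hsucc, hstar, hprec, hsucc, add_comm ((r (T y)) x), ← hT, hl, neg_neg]
end

section
/- Let (A, ∗) be an antiassociative algebra. There exists a compatible antidendriform algebra structure on A (products ≻, ≺ with x∗y = x≻y + x≺y) if and only if there exists an invertible O-operator T : V → A associated to some bimodule (l, r, V) of (A, ∗); in that case the structure is x ≻ y = T(l(x)T⁻¹(y)), x ≺ y = T(r(y)T⁻¹(x)). -/
universe u

/-- An invertible O-operator on an antiassociative algebra (A, mul):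
a bimodule (l, r, V) together with a bijective linear map T : V → A
satisfying the O-operator identity. -/
structure InvOOperator (K A : Type u) [Field K] [AddCommGroup A] [Module K A]
    (mul : A → A → A) where
  V : Type u
  [instAddV : AddCommGroup V]
  [instModV : Module K V]
  l : A → V →ₗ[K] V
  r : A → V →ₗ[K] V
  T : V →ₗ[K] A
  bim_l : ∀ (x y : A) (v : V), l (mul x y) v = - l x (l y v)
  bim_r : ∀ (x y : A) (v : V), r (mul x y) v = - r y (r x v)
  bim_lr : ∀ (x y : A) (v : V), l x (r y v) = - r y (l x v)
  oop : ∀ u v : V, mul (T u) (T v) = T (l (T u) v + r (T v) u)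
  bij : Function.Bijective T

theorem antidend_of_O {K A : Type u} [Field K] [AddCommGroup A] [Module K A]
    (mul : A →ₗ[K] A →ₗ[K] A)
    (O : InvOOperator K A (fun x y => mul x y)) :
    ∃ succ prec : A → A → A,
        (∀ x y z : A, prec (prec x y) z = - prec x (prec y z + succ y z)) ∧
        (∀ x y z : A, prec (succ x y) z = - succ x (prec y z)) ∧
        (∀ x y z : A, succ x (succ y z) = - succ (prec x y + succ x y) z) ∧
        (∀ x y : A, mul x y = succ x y + prec x y) ∧
        (∀ x y : A, succ x y = O.T (O.l x ((Equiv.ofBijective O.T O.bij).symm y))) ∧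
        (∀ x y : A, prec x y = O.T (O.r y ((Equiv.ofBijective O.T O.bij).symm x))) := by
  letI := O.instAddV; letI := O.instModV
  set e := Equiv.ofBijective O.T O.bij with he
  have hST : ∀ v, e.symm (O.T v) = v := fun v => e.symm_apply_apply v
  have hTS : ∀ y, O.T (e.symm y) = y := fun y => e.apply_symm_apply y
  have compat : ∀ x y : A,
      mul x y = O.T (O.l x (e.symm y)) + O.T (O.r y (e.symm x)) := by
    intro x y
    have h := O.oop (e.symm x) (e.symm y)
    simp only [hTS] at h
    rw [h, map_add]
  refine ⟨fun x y => O.T (O.l x (e.symm y)), fun x y => O.T (O.r y (e.symm x)),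
    ?_, ?_, ?_, compat, fun _ _ => rfl, fun _ _ => rfl⟩
  · intro x y z
    simp only [hST]
    have hm : O.T (O.r z (e.symm y)) + O.T (O.l y (e.symm z)) = mul y z := by
      rw [compat y z]; abel
    rw [hm]
    have hb := O.bim_r y z (e.symm x)
    rw [hb, map_neg, neg_neg]
  · intro x y z
    simp only [hST]
    have hb := O.bim_lr x z (e.symm y)
    rw [hb, map_neg, neg_neg]
  · intro x y z
    simp only [hST]
    have hm : O.T (O.r y (e.symm x)) + O.T (O.l x (e.symm y)) = mul x y := by
      rw [compat x y]; abel
    rw [hm]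
    have hb := O.bim_l x y (e.symm z)
    rw [hb, map_neg, neg_neg]

/-- An antiassociative algebra admits a compatible antidendriform structure iff
it admits an invertible O-operator; in that case the structure is given by
x ≻ y = T(l(x)T⁻¹(y)), x ≺ y = T(r(y)T⁻¹(x)). -/
theorem compatible_antidendriform_iff_invertible_o_operator
    {K A : Type u} [Field K] [AddCommGroup A] [Module K A]
    (mul : A →ₗ[K] A →ₗ[K] A)
    (hanti : ∀ x y z : A, mul (mul x y) z = - mul x (mul y z)) :
    ((∃ succ prec : A → A → A,
        (∀ x y z : A, prec (prec x y) z = - prec x (prec y z + succ y z)) ∧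
        (∀ x y z : A, prec (succ x y) z = - succ x (prec y z)) ∧
        (∀ x y z : A, succ x (succ y z) = - succ (prec x y + succ x y) z) ∧
        (∀ x y : A, mul x y = succ x y + prec x y)) ↔
      Nonempty (InvOOperator K A (fun x y => mul x y))) ∧
    (∀ O : InvOOperator K A (fun x y => mul x y),
      ∃ succ prec : A → A → A,
        (∀ x y z : A, prec (prec x y) z = - prec x (prec y z + succ y z)) ∧
        (∀ x y z : A, prec (succ x y) z = - succ x (prec y z)) ∧
        (∀ x y z : A, succ x (succ y z) = - succ (prec x y + succ x y) z) ∧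
        (∀ x y : A, mul x y = succ x y + prec x y) ∧
        (∀ x y : A, succ x y = O.T (O.l x ((Equiv.ofBijective O.T O.bij).symm y))) ∧
        (∀ x y : A, prec x y = O.T (O.r y ((Equiv.ofBijective O.T O.bij).symm x)))) := by
  refine ⟨⟨fun _ => ?_, fun ⟨O⟩ => ?_⟩, fun O => antidend_of_O mul O⟩
  · exact ⟨{ V := A
             l := fun x => mul x
             r := fun _ => 0
             T := LinearMap.id
             bim_l := fun x y v => hanti x y v
             bim_r := fun _ _ _ => by simp
             bim_lr := fun _ _ _ => by simp
             oop := fun u v => by simp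
             bij := Function.bijective_id }⟩
  · obtain ⟨s, p, h1, h2, h3, h4, _, _⟩ := antidend_of_O mul O
    exact ⟨s, p, h1, h2, h3, h4⟩
end
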